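/- Let x ∈ F_2^n and let y be obtained from x by deleting a 0 at position k. Let v_L be the number of ones in x strictly before position k and v_R the number of ones strictly after position k. Then for any integer v with −v_R ≤ v ≤ v_L, the unique vector obtained by inserting a 0 into y immediately after its (v_L − v)-th one has VT syndrome equal to (Σ_{i=1}^n i·x_i) + v. -/

import Mathlib

/-- The VT syndrome Σ_{i=1}^m i·x_i of a binary word, over the integers. -/
def listSynd (x : List Bool) : ℤ :=
  ∑ i ∈ Finset.range x.length, ((i : ℤ) + 1) * (if x.getD i false then 1 else 0)

/-- `insertAt y v j` inserts the block `v` into `y` at (0-indexed) position `j`. -/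
def insertAt (y v : List Bool) (j : ℕ) : List Bool :=
  y.take j ++ v ++ y.drop j

/-!
Inserting a 0 into `y` at position `j` shifts every one after `j` one place to the right, so it
raises the syndrome of `y` by the number of ones of `y` after `j`. Since `x` is `y` with a 0
inserted at `k`, moving the inserted 0 from `k` to `p` changes the syndrome by the number of ones
of `y` before `k` minus the number before `p`, that is by `v_L - (v_L - v) = v`.
-/

lemma count_true_eq_sum_getD (t : List Bool) :
    (t.count true : ℤ) = ∑ i ∈ Finset.range t.length, if t.getD i false then 1 else 0 := by
  induction t with
  | nil => simp
  | cons b t ih =>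
    rw [List.length_cons, Finset.sum_range_succ', List.count_cons]
    cases b <;> simp [ih]

lemma listSynd_nil : listSynd [] = 0 := rfl

lemma listSynd_cons (b : Bool) (t : List Bool) :
    listSynd (b :: t) = (if b then 1 else 0) + t.count true + listSynd t := by
  simp only [listSynd, List.length_cons, Finset.sum_range_succ', List.getD_cons_succ,
    List.getD_cons_zero, count_true_eq_sum_getD, Nat.cast_add, Nat.cast_one, add_mul,
    Finset.sum_add_distrib, one_mul, Nat.cast_zero]
  ring

lemma listSynd_append (s t : List Bool) :
    listSynd (s ++ t) = listSynd s + s.length * t.count true + listSynd t := by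
  induction s with
  | nil => simp [listSynd_nil]
  | cons b s ih =>
    simp only [List.cons_append, listSynd_cons, ih, List.count_append, List.length_cons]
    push_cast
    ring

lemma listSynd_insertAt_false (y : List Bool) (j : ℕ) :
    listSynd (insertAt y [false] j) = listSynd y + (y.drop j).count true := by
  have hy := listSynd_append (y.take j) (y.drop j)
  rw [List.take_append_drop] at hy
  rw [insertAt, List.append_assoc, List.singleton_append, listSynd_append, listSynd_cons, hy,
    List.count_cons_of_ne Bool.false_ne_true, if_neg Bool.false_ne_true]
  ring

lemma listSynd_insertAt_false_sub (y : List Bool) (p q : ℕ) :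
    listSynd (insertAt y [false] p) - listSynd (insertAt y [false] q)
      = (y.take q).count true - (y.take p).count true := by
  have split (j : ℕ) : ((y.take j).count true : ℤ) + (y.drop j).count true = y.count true := by
    rw [← Nat.cast_add, ← List.count_append, List.take_append_drop]
  rw [listSynd_insertAt_false, listSynd_insertAt_false]
  linarith [split p, split q]

lemma insertAt_eraseIdx_self {x : List Bool} {k : ℕ} {b : Bool} (h : x[k]? = some b) :
    insertAt (x.eraseIdx k) [b] k = x := by
  obtain ⟨hk, rfl⟩ := List.getElem?_eq_some_iff.mp h
  have hlen : (x.take k).length = k := List.length_take_of_le hk.le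
  rw [insertAt, List.eraseIdx_eq_take_drop_succ, List.take_left' hlen, List.drop_left' hlen,
    List.append_assoc, List.singleton_append, List.getElem_cons_drop, List.take_append_drop]

theorem mismatched_VT_insert_zero_general (x : List Bool) (k : ℕ)
    (hzero : x.getD k true = false) (v : ℤ) :
    ∀ p : ℕ, p ≤ (x.eraseIdx k).length →
      -- the prefix of length p of y = eraseIdx x k contains exactly v_L − v ones,
      ((((x.eraseIdx k).take p).count true : ℤ) = ((x.take k).count true : ℤ) - v) →
      -- and p is immediately after a one (or at the front):
      (p = 0 ∨ (x.eraseIdx k).getD (p - 1) false = true) →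
      listSynd (insertAt (x.eraseIdx k) [false] p) = listSynd x + v := by
  intro p _ hcount _
  have hxk : x[k]? = some false := by
    rw [List.getD_eq_getElem?_getD] at hzero
    cases hx : x[k]? <;> simp_all
  have hmove := listSynd_insertAt_false_sub (x.eraseIdx k) p k
  rw [insertAt_eraseIdx_self hxk, List.take_eraseIdx_eq_take_of_le x k k le_rfl, hcount] at hmove
  linarith

theorem mismatched_VT_insert_zero (x : List Bool) (k : ℕ) (hk : k < x.length)
    (hzero : x.getD k true = false) (v : ℤ)
    (hvlo : -(((x.drop (k + 1)).count true : ℤ)) ≤ v)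
    (hvhi : v ≤ ((x.take k).count true : ℤ)) :
    ∀ p : ℕ, p ≤ (x.eraseIdx k).length →
      -- the prefix of length p of y = eraseIdx x k contains exactly v_L − v ones,
      ((((x.eraseIdx k).take p).count true : ℤ) = ((x.take k).count true : ℤ) - v) →
      -- and p is immediately after a one (or at the front):
      (p = 0 ∨ (x.eraseIdx k).getD (p - 1) false = true) →
      listSynd (insertAt (x.eraseIdx k) [false] p) = listSynd x + v :=
  mismatched_VT_insert_zero_general x k hzero v
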